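/- An ascent sequence avoids the pattern 010 if and only if it is weakly increasing, and the number of ascent sequences of length n avoiding 010 is 2^{n-1}. -/

import Mathlib

/-- Number of ascents (adjacent strict rises) in a list of naturals. -/
def ascList (l : List ℕ) : ℕ :=
  (l.zip l.tail).countP (fun p => decide (p.1 < p.2))

/-- `l` is an ascent sequence: nonempty, starts with 0, and each later letter is at most
one more than the number of ascents in the preceding prefix. -/
def IsAscSeq (l : List ℕ) : Prop :=
  l ≠ [] ∧ l.getD 0 0 = 0 ∧
    ∀ i, 0 < i → i < l.length → l.getD i 0 ≤ ascList (l.take i) + 1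

/-- A sequence contains the pattern 010. -/
def Contains010 (l : List ℕ) : Prop :=
  ∃ i j k, i < j ∧ j < k ∧ k < l.length ∧
    l.getD i 0 = l.getD k 0 ∧ l.getD i 0 < l.getD j 0

/-! An ascent sequence that is weakly increasing up to position `m` has at most `x m` ascents
there, so `x (m+1) ≤ x m + 1`. Hence a 010-avoiding ascent sequence climbs from `0` in steps of
`0` or `1`: at a first descent `x (m+1) < x m` the climb has already passed through the value
`x (m+1)`, which yields an occurrence of 010. Conversely every such staircase is an increasing
ascent sequence, since its value at each position equals its number of ascents so far, and a
staircase of length `n` is determined by its `n - 1` steps. -/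

theorem ascList_cons_cons (a b : ℕ) (l : List ℕ) :
    ascList (a :: b :: l) = ascList (b :: l) + if a < b then 1 else 0 := by
  by_cases h : a < b <;> simp [ascList, h]

def IsUnitStep (a b : ℕ) : Prop := b = a ∨ b = a + 1

theorem IsUnitStep.le {a b : ℕ} (h : IsUnitStep a b) : a ≤ b := by
  rcases h with rfl | rfl <;> omega

theorem IsUnitStep.le_add_one {a b : ℕ} (h : IsUnitStep a b) : b ≤ a + 1 := by
  rcases h with rfl | rfl <;> omega

def IsStaircase (l : List ℕ) : Prop := l.head? = some 0 ∧ l.IsChain IsUnitStep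

namespace List

theorem IsChain.getLast_eq_head_add_ascList {l : List ℕ} (h : l.IsChain IsUnitStep)
    (hne : l ≠ []) : l.getLast hne = l.head hne + ascList l := by
  induction l with
  | nil => contradiction
  | cons a t ih =>
    cases t with
    | nil => rfl
    | cons b t =>
      rw [isChain_cons_cons] at h
      rw [getLast_cons_cons, ih h.2 (cons_ne_nil b t), ascList_cons_cons]
      have hab : b = a ∨ b = a + 1 := h.1
      simp only [head_cons]
      split_ifs <;> omega

theorem IsChain.mem_of_head_le_of_le_getLast {l : List ℕ} (h : l.IsChain (fun a b => b ≤ a + 1))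
    (hne : l ≠ []) {v : ℕ} (hhead : l.head hne ≤ v) (hlast : v ≤ l.getLast hne) : v ∈ l := by
  induction l with
  | nil => contradiction
  | cons a t ih =>
    rw [head_cons] at hhead
    rcases hhead.eq_or_lt with rfl | hav
    · exact mem_cons_self
    cases t with
    | nil => rw [getLast_singleton] at hlast; omega
    | cons b t =>
      rw [isChain_cons_cons] at h
      exact mem_cons_of_mem a (ih h.2 (cons_ne_nil b t) (by rw [head_cons]; omega) hlast)

theorem scanl_injective {α β : Type*} {f : β → α → β} (hf : ∀ b, Function.Injective (f b))
    (b : β) : Function.Injective (scanl f b) := by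
  intro l₁ l₂ h
  induction l₁ generalizing b l₂ with
  | nil => cases l₂ <;> simp_all
  | cons x l₁ ih =>
    cases l₂ with
    | nil => simp at h
    | cons y l₂ =>
      rw [scanl_cons, scanl_cons, cons.injEq] at h
      have hxy : x = y := hf b (by simpa using congrArg head? h.2)
      subst hxy
      rw [ih _ h.2]

theorem Pairwise.not_contains010 {l : List ℕ} (h : l.Pairwise (· ≤ ·)) : ¬ Contains010 l := by
  rintro ⟨i, j, k, hij, hjk, hk, heq, hlt⟩
  have := pairwise_iff_getElem.1 h j k (by omega) hk hjk
  rw [getD_eq_getElem _ _ (by omega), getD_eq_getElem _ _ (by omega)] at heq hlt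
  omega

end List

open List

theorem isAscSeq_singleton (x : ℕ) : IsAscSeq [x] ↔ x = 0 := by
  simp +contextual [IsAscSeq]

theorem isAscSeq_append_singleton {l : List ℕ} (hl : l ≠ []) (x : ℕ) :
    IsAscSeq (l ++ [x]) ↔ IsAscSeq l ∧ x ≤ ascList l + 1 := by
  have hpos : 0 < l.length := length_pos_iff.2 hl
  have hprefix : ∀ i < l.length, (l ++ [x]).getD i 0 ≤ ascList ((l ++ [x]).take i) + 1 ↔
      l.getD i 0 ≤ ascList (l.take i) + 1 := fun i hi => by
    rw [getD_append _ _ _ _ hi, take_append_of_le_length hi.le]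
  have hlast : (l ++ [x]).getD l.length 0 = x := by simp
  simp only [IsAscSeq, ne_eq, append_eq_nil_iff, reduceCtorEq, and_false, not_false_eq_true,
    getD_append _ _ _ _ hpos, true_and, hl, length_append, length_singleton]
  constructor
  · rintro ⟨h0, hasc⟩
    refine ⟨⟨h0, fun i hi0 hi => (hprefix i hi).1 (hasc i hi0 (by omega))⟩, ?_⟩
    simpa [hlast] using hasc l.length hpos (by omega)
  · rintro ⟨⟨h0, hasc⟩, hx⟩
    refine ⟨h0, fun i hi0 hi => ?_⟩
    rcases Nat.lt_succ_iff_lt_or_eq.1 hi with hi | rfl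
    · exact (hprefix i hi).2 (hasc i hi0 hi)
    · simpa [hlast] using hx

theorem Contains010.append {l : List ℕ} (h : Contains010 l) (m : List ℕ) :
    Contains010 (l ++ m) := by
  obtain ⟨i, j, k, hij, hjk, hk, heq, hlt⟩ := h
  refine ⟨i, j, k, hij, hjk, by rw [length_append]; omega, ?_, ?_⟩ <;>
    rwa [getD_append _ _ _ _ (by omega), getD_append _ _ _ _ (by omega)]

theorem contains010_append_singleton {l : List ℕ} {x i j : ℕ} (hij : i < j) (hj : j < l.length)
    (hi : l[i] = x) (hx : x < l[j]) : Contains010 (l ++ [x]) := by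
  refine ⟨i, j, l.length, hij, hj, by simp, ?_, ?_⟩ <;>
    simp [getElem?_append_left, hj, hij.trans hj, hi, hx]

theorem isStaircase_singleton (x : ℕ) : IsStaircase [x] ↔ x = 0 := by
  simp [IsStaircase]

theorem isStaircase_append_singleton {l : List ℕ} (hl : l ≠ []) (x : ℕ) :
    IsStaircase (l ++ [x]) ↔ IsStaircase l ∧ IsUnitStep (l.getLast hl) x := by
  simp [IsStaircase, head?_append_of_ne_nil _ hl, isChain_append, getLast?_eq_some_getLast hl,
    and_assoc]

namespace IsStaircase

variable {l : List ℕ}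

theorem head_eq_zero (h : IsStaircase l) (hl : l ≠ []) : l.head hl = 0 :=
  (head_eq_iff_head?_eq_some hl).2 h.1

theorem pairwise_le (h : IsStaircase l) : l.Pairwise (· ≤ ·) :=
  isChain_iff_pairwise.1 (h.2.imp fun _ _ => IsUnitStep.le)

theorem ascList_eq_getLast (h : IsStaircase l) (hl : l ≠ []) : ascList l = l.getLast hl := by
  rw [h.2.getLast_eq_head_add_ascList hl, h.head_eq_zero hl, zero_add]

theorem isAscSeq (h : IsStaircase l) : IsAscSeq l := by
  induction l using List.reverseRecOn with
  | nil => simp [IsStaircase] at h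
  | append_singleton l x ih =>
    rcases eq_or_ne l [] with rfl | hl
    · simpa [isAscSeq_singleton, isStaircase_singleton] using h
    obtain ⟨hl', hx⟩ := (isStaircase_append_singleton hl x).1 h
    refine (isAscSeq_append_singleton hl x).2 ⟨ih hl', ?_⟩
    rw [hl'.ascList_eq_getLast hl]
    exact hx.le_add_one

end IsStaircase

theorem IsAscSeq.isStaircase_of_not_contains010 {l : List ℕ} (h : IsAscSeq l)
    (hc : ¬ Contains010 l) : IsStaircase l := by
  induction l using List.reverseRecOn with
  | nil => exact absurd rfl h.1
  | append_singleton l x ih =>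
    rcases eq_or_ne l [] with rfl | hl
    · simpa [isAscSeq_singleton, isStaircase_singleton] using h
    obtain ⟨hl', hx⟩ := (isAscSeq_append_singleton hl x).1 h
    have hs : IsStaircase l := ih hl' fun h' => hc (h'.append [x])
    refine (isStaircase_append_singleton hl x).2 ⟨hs, ?_⟩
    rw [hs.ascList_eq_getLast hl] at hx
    by_contra hstep
    have hlt : x < l.getLast hl := by unfold IsUnitStep at hstep; omega
    have hmem : x ∈ l := (hs.2.imp fun _ _ => IsUnitStep.le_add_one).mem_of_head_le_of_le_getLast
      hl ((hs.head_eq_zero hl).trans_le (Nat.zero_le x)) hlt.le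
    obtain ⟨i, hi, rfl⟩ := mem_iff_getElem.1 hmem
    rw [getLast_eq_getElem] at hlt
    have hil : i ≠ l.length - 1 := by
      rintro rfl
      exact lt_irrefl _ hlt
    exact hc (contains010_append_singleton (by omega) (by omega) rfl hlt)

theorem ncard_setOf_length_eq (α : Type*) [Fintype α] (n : ℕ) :
    {l : List α | l.length = n}.ncard = Fintype.card α ^ n := by
  rw [← Nat.card_coe_set_eq, ← card_vector, ← Nat.card_eq_fintype_card]
  rfl

theorem isChain_isUnitStep_scanl (a : ℕ) (bs : List Bool) :
    (bs.scanl (fun c t => c + t.toNat) a).IsChain IsUnitStep := by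
  induction bs generalizing a with
  | nil => exact isChain_singleton a
  | cons t bs ih =>
    rw [scanl_cons, isChain_cons, head?_scanl]
    refine ⟨?_, ih _⟩
    rintro _ ⟨⟩
    cases t <;> simp [IsUnitStep]

theorem exists_scanl_eq_of_isChain_isUnitStep {a : ℕ} {l : List ℕ}
    (h : (a :: l).IsChain IsUnitStep) :
    ∃ bs : List Bool, bs.scanl (fun c t => c + t.toNat) a = a :: l := by
  induction l generalizing a with
  | nil => exact ⟨[], rfl⟩
  | cons b l ih =>
    rw [isChain_cons_cons] at h
    obtain ⟨bs, hbs⟩ := ih h.2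
    refine ⟨decide (b = a + 1) :: bs, ?_⟩
    rcases h.1 with rfl | rfl <;> simpa using hbs

theorem ncard_setOf_isStaircase (n : ℕ) :
    {l : List ℕ | l.length = n + 1 ∧ IsStaircase l}.ncard = 2 ^ n := by
  have hinj : ∀ c : ℕ, Function.Injective fun t : Bool => c + t.toNat := by
    intro c t₁ t₂ h
    cases t₁ <;> cases t₂ <;> simp_all
  have himage : {l : List ℕ | l.length = n + 1 ∧ IsStaircase l} =
      scanl (fun c t => c + t.toNat) 0 '' {bs : List Bool | bs.length = n} := by
    ext l
    constructor
    · rintro ⟨hlen, h0, hchain⟩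
      obtain ⟨t, rfl⟩ : ∃ t, l = 0 :: t := by simpa [head?_eq_some_iff] using h0
      obtain ⟨bs, hbs⟩ := exists_scanl_eq_of_isChain_isUnitStep hchain
      refine ⟨bs, ?_, hbs⟩
      simpa [← hbs] using hlen
    · rintro ⟨bs, rfl, rfl⟩
      exact ⟨length_scanl, head?_scanl, isChain_isUnitStep_scanl 0 bs⟩
  rw [himage, Set.ncard_image_of_injective _ (scanl_injective hinj 0),
    ncard_setOf_length_eq, Fintype.card_bool]

theorem isAscSeq_and_not_contains010_iff (l : List ℕ) :
    IsAscSeq l ∧ ¬ Contains010 l ↔ IsStaircase l :=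
  ⟨fun h => h.1.isStaircase_of_not_contains010 h.2,
    fun h => ⟨h.isAscSeq, h.pairwise_le.not_contains010⟩⟩

/-- An ascent sequence avoids 010 iff it is weakly increasing; consequently there are
`2^(n-1)` ascent sequences of length `n` avoiding 010. -/
theorem stmt5 (n : ℕ) (hn : 1 ≤ n) :
    (∀ l : List ℕ, IsAscSeq l → (¬ Contains010 l ↔ l.Pairwise (· ≤ ·))) ∧
    {l : List ℕ | l.length = n ∧ IsAscSeq l ∧ ¬ Contains010 l}.ncard = 2 ^ (n - 1) := by
  refine ⟨fun l hl => ⟨fun hc => (hl.isStaircase_of_not_contains010 hc).pairwise_le,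
    Pairwise.not_contains010⟩, ?_⟩
  obtain ⟨m, rfl⟩ : ∃ m, n = m + 1 := ⟨n - 1, by omega⟩
  simp only [isAscSeq_and_not_contains010_iff, ncard_setOf_isStaircase, Nat.add_sub_cancel]
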